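/- arXiv:2602.15614 — 2 statements merged into one kernel-verified Lean document; each statement's English description precedes it below -/
import Mathlib

section
/- With notation as in the onto-DP setting, the onto-defense space of a saturated database D (namely {D} together with its (I, d_b)-onto neighbors) equals the union of all attack spaces A_{d_u}^{I}(D0) over priors D0 with D ∈ A_{d_u}^{I}(D0), provided D has at least one antecedent reachable from some prior (i.e., D lies in at least one attack space). -/
def attackSpace {DB : Type*} (sub : DB → DB → Prop) (du : DB → DB → ℕ)
    (I : DB → DB) (D0 : DB) : Set DB :=
  {D' | ∃ D'', I D'' = D' ∧ sub D0 D'' ∧ du D0 D'' = 1}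

def ontoNbr {DB : Type*} (db : DB → DB → ℕ) (I : DB → DB) (D D' : DB) : Prop :=
  ∃ Dm Dm', I Dm = D ∧ I Dm' = D' ∧ db Dm Dm' = 1

/-- The onto-defense space of a saturated database `D` (`D` together with its
`(I,d_b)`-onto neighbors) equals the union of all attack spaces containing `D`,
provided `D` lies in at least one attack space. -/
theorem stmt3 {DB : Type*} (sub : DB → DB → Prop) (du db : DB → DB → ℕ) (I : DB → DB)
    (hI : ∀ x, I (I x) = I x)
    (hpair : ∀ D1 D2 : DB, db D1 D2 = 1 ↔
      ∃ D0, sub D0 D1 ∧ du D0 D1 = 1 ∧ sub D0 D2 ∧ du D0 D2 = 1)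
    (D : DB) (hsat : I D = D)
    (hreach : ∃ D0, D ∈ attackSpace sub du I D0) :
    insert D {D' | ontoNbr db I D D'} =
      ⋃ D0 ∈ {D0 : DB | D ∈ attackSpace sub du I D0}, attackSpace sub du I D0 := by
  ext D'
  simp only [Set.mem_insert_iff, Set.mem_setOf_eq, Set.mem_iUnion]
  constructor
  · rintro (rfl | ⟨Dm, Dm', hDm, hDm', hdb⟩)
    · obtain ⟨D0, hD0⟩ := hreach
      exact ⟨D0, hD0, hD0⟩
    · obtain ⟨D0, h1, h2, h3, h4⟩ := (hpair Dm Dm').mp hdb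
      exact ⟨D0, ⟨Dm, hDm, h1, h2⟩, ⟨Dm', hDm', h3, h4⟩⟩
  · rintro ⟨D0, ⟨Dm, hDm, h1, h2⟩, ⟨Dm', hDm', h3, h4⟩⟩
    exact Or.inr ⟨Dm, Dm', hDm, hDm', (hpair Dm Dm').mpr ⟨D0, h1, h2, h3, h4⟩⟩
end

section
/- If a randomized mechanism f satisfies ε-DP with respect to the (I, d_b)-onto neighborhood relation, then for every prior D0 and every pair of databases D, D' in the attack space A_{d_u}^{I}(D0) (with d_u, d_b paired), and for every measurable set S of outputs, Pr[f(D) ∈ S] ≤ e^ε · Pr[f(D') ∈ S]. -/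
open MeasureTheory

/-- If a randomized mechanism `f` is `ε`-DP with respect to the `(I,d_b)`-onto
neighborhood relation, then for any two databases in a common attack space, the DP
inequality holds on every measurable output set. -/
theorem stmt13 {DB : Type*} {Ω : Type*} [MeasurableSpace Ω]
    (sub : DB → DB → Prop) (du db : DB → DB → ℕ) (I : DB → DB)
    (hI : ∀ x, I (I x) = I x)
    (hpair : ∀ D1 D2 : DB, db D1 D2 = 1 ↔
      ∃ Dc, sub Dc D1 ∧ du Dc D1 = 1 ∧ sub Dc D2 ∧ du Dc D2 = 1)
    (f : DB → Measure Ω) (ε : ℝ) (hε : 0 < ε)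
    (hDP : ∀ D1 D2 : DB, ontoNbr db I D1 D2 → ∀ S : Set Ω, MeasurableSet S →
      f D1 S ≤ ENNReal.ofReal (Real.exp ε) * f D2 S)
    (D0 D D' : DB)
    (hD : D ∈ attackSpace sub du I D0) (hD' : D' ∈ attackSpace sub du I D0) :
    ∀ S : Set Ω, MeasurableSet S → f D S ≤ ENNReal.ofReal (Real.exp ε) * f D' S := by
  obtain ⟨D1, hI1, hs1, hd1⟩ := hD
  obtain ⟨D2, hI2, hs2, hd2⟩ := hD'
  exact hDP D D' ⟨D1, D2, hI1, hI2, (hpair D1 D2).2 ⟨D0, hs1, hd1, hs2, hd2⟩⟩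
end
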